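/- arXiv:2005.01670 — 7 statements merged into one kernel-verified Lean document; each statement's English description precedes it below -/
import Mathlib

section
/- Let C(X) be the set of nonempty finitely generated convex subsets of D(X), equipped with operations S ⊕ T = conv(S ∪ T) and S +ₚ T = {p·d + (1−p)·e : d ∈ S, e ∈ T} for p ∈ (0,1). Then ⊕ is associative, commutative, and idempotent; each +ₚ satisfies S +ₚ S = S, S +ₚ T = T +_{1−p} S, and (S +_q T) +ₚ U = S +_{pq} (T +_{p(1−q)/(1−pq)} U); and distributivity holds: (S ⊕ T) +ₚ U = (S +ₚ U) ⊕ (T +ₚ U). That is, C(X) is a convex semilattice. -/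
open scoped Pointwise

def IsDist {X : Type*} (d : X →₀ ℝ) : Prop :=
  (∀ x, 0 ≤ d x) ∧ d.sum (fun _ v => v) = 1

def psum {V : Type*} [AddCommGroup V] [Module ℝ V] (p : ℝ) (A B : Set V) : Set V :=
  {z | ∃ a ∈ A, ∃ b ∈ B, z = p • a + (1 - p) • b}

def InC {X : Type*} (S : Set (X →₀ ℝ)) : Prop :=
  S.Nonempty ∧ (∀ d ∈ S, IsDist d) ∧
    ∃ F : Finset (X →₀ ℝ), S = convexHull ℝ (F : Set (X →₀ ℝ))

lemma psum_eq {V : Type*} [AddCommGroup V] [Module ℝ V] (p : ℝ) (A B : Set V) :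
    psum p A B = p • A + (1 - p) • B := by
  ext z
  simp only [psum, Set.mem_setOf_eq, Set.mem_add, Set.mem_smul_set]
  constructor
  · rintro ⟨a, ha, b, hb, rfl⟩
    exact ⟨p • a, ⟨a, ha, rfl⟩, (1 - p) • b, ⟨b, hb, rfl⟩, rfl⟩
  · rintro ⟨_, ⟨a, ha, rfl⟩, _, ⟨b, hb, rfl⟩, rfl⟩
    exact ⟨a, ha, b, hb, rfl⟩

/-- `C(X)` with `S ⊕ T = conv(S ∪ T)` and Minkowski sums `+ₚ` is a convex semilattice. -/
theorem CX_convex_semilattice {X : Type*}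
    (S T U : Set (X →₀ ℝ)) (hS : InC S) (hT : InC T) (hU : InC U)
    (p q : ℝ) (hp : p ∈ Set.Ioo (0:ℝ) 1) (hq : q ∈ Set.Ioo (0:ℝ) 1) :
    -- ⊕ is associative, commutative, idempotent
    convexHull ℝ (convexHull ℝ (S ∪ T) ∪ U) = convexHull ℝ (S ∪ convexHull ℝ (T ∪ U)) ∧
    convexHull ℝ (S ∪ T) = convexHull ℝ (T ∪ S) ∧
    convexHull ℝ (S ∪ S) = S ∧
    -- barycentric axioms for +ₚ
    psum p S S = S ∧
    psum p S T = psum (1 - p) T S ∧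
    psum p (psum q S T) U = psum (p * q) S (psum (p * (1 - q) / (1 - p * q)) T U) ∧
    -- distributivity
    psum p (convexHull ℝ (S ∪ T)) U = convexHull ℝ (psum p S U ∪ psum p T U) := by
  obtain ⟨hp0, hp1⟩ := hp
  obtain ⟨hq0, hq1⟩ := hq
  have hSc : Convex ℝ S := by obtain ⟨F, rfl⟩ := hS.2.2; exact convex_convexHull ℝ _
  have hUc : Convex ℝ U := by obtain ⟨F, rfl⟩ := hU.2.2; exact convex_convexHull ℝ _
  have hpq : (1 : ℝ) - p * q ≠ 0 := by nlinarith
  refine ⟨?_, ?_, ?_, ?_, ?_, ?_, ?_⟩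
  · rw [convexHull_convexHull_union_left, convexHull_convexHull_union_right, Set.union_assoc]
  · rw [Set.union_comm]
  · rw [Set.union_self, hSc.convexHull_eq]
  · ext z
    constructor
    · rintro ⟨a, ha, b, hb, rfl⟩
      exact hSc ha hb hp0.le (by linarith) (by ring)
    · intro hz
      exact ⟨z, hz, z, hz, by module⟩
  · ext z
    constructor
    · rintro ⟨a, ha, b, hb, rfl⟩
      exact ⟨b, hb, a, ha, by module⟩
    · rintro ⟨b, hb, a, ha, rfl⟩
      exact ⟨a, ha, b, hb, by module⟩
  · set r : ℝ := p * (1 - q) / (1 - p * q) with hr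
    ext z
    constructor
    · rintro ⟨w, ⟨a, ha, b, hb, rfl⟩, c, hc, rfl⟩
      refine ⟨a, ha, r • b + (1 - r) • c, ⟨b, hb, c, hc, rfl⟩, ?_⟩
      rw [hr]
      match_scalars <;> field_simp <;> ring
    · rintro ⟨a, ha, w, ⟨b, hb, c, hc, rfl⟩, rfl⟩
      refine ⟨q • a + (1 - q) • b, ⟨a, ha, b, hb, rfl⟩, c, hc, ?_⟩
      rw [hr]
      match_scalars <;> field_simp <;> ring
  · rw [psum_eq, psum_eq, psum_eq]
    calc p • convexHull ℝ (S ∪ T) + (1 - p) • U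
        = convexHull ℝ (p • (S ∪ T)) + convexHull ℝ ((1 - p) • U) := by
          rw [convexHull_smul, (hUc.smul _).convexHull_eq]
      _ = convexHull ℝ (p • (S ∪ T) + (1 - p) • U) := (convexHull_add _ _).symm
      _ = convexHull ℝ (p • S + (1 - p) • U ∪ (p • T + (1 - p) • U)) := by
          rw [Set.smul_set_union, Set.union_add]
end

section
/- For the monad C of nonempty finitely generated convex sets of distributions, the multiplication μ : CCX → CX defined by μ(S) = ⋃_{Φ ∈ S} { Σ_{U ∈ supp Φ} Φ(U)·d : d ∈ U } preserves convex union: μ(S₁ ⊕ S₂) = μ(S₁) ⊕ μ(S₂) for all S₁, S₂ ∈ CC(X). -/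
/-- A distribution over `C(X)`: a finitely supported distribution on `Set (X →₀ ℝ)`
whose support consists of elements of `C(X)`. -/
def IsDistC {X : Type*} (Φ : Set (X →₀ ℝ) →₀ ℝ) : Prop :=
  IsDist Φ ∧ ∀ U ∈ Φ.support, InC U

/-- `S ∈ CC(X)`: a nonempty finitely generated convex set of distributions over `C(X)`. -/
def InCC {X : Type*} (S : Set (Set (X →₀ ℝ) →₀ ℝ)) : Prop :=
  S.Nonempty ∧ (∀ Φ ∈ S, IsDistC Φ) ∧
    ∃ F : Finset (Set (X →₀ ℝ) →₀ ℝ), S = convexHull ℝ (F : Set (Set (X →₀ ℝ) →₀ ℝ))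

/-- The multiplication `μ : CCX → CX`:
`μ(S) = ⋃_{Φ ∈ S} { Σ_{U ∈ supp Φ} Φ(U)·d : d ∈ U }`. -/
def mu {X : Type*} (S : Set (Set (X →₀ ℝ) →₀ ℝ)) : Set (X →₀ ℝ) :=
  ⋃ Φ ∈ S, {d | ∃ g : Set (X →₀ ℝ) → (X →₀ ℝ),
    (∀ U ∈ Φ.support, g U ∈ U) ∧ d = ∑ U ∈ Φ.support, Φ U • g U}

/-!
Writing `Σ_U Φ(U) • d_U` as the linear combination `linearCombination ℝ d Φ`, which is linear in
`Φ`, the inclusion `μ(S₁ ⊕ S₂) ⊆ μ(S₁) ⊕ μ(S₂)` is immediate: a point of `S₁ ⊕ S₂ = S₁ ⋈ S₂`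
is `a • Ψ₁ + b • Ψ₂`, and since all weights are nonnegative, a choice function on its support is
one on the supports of `Ψ₁` and `Ψ₂`. The reverse inclusion amounts to convexity of `μ(S)` for
convex `S`: to combine `(Φ₁, d₁)` and `(Φ₂, d₂)` with weights `a, b`, take `Φ = a • Φ₁ + b • Φ₂`
and let `d U` be the convex combination of `d₁ U` and `d₂ U` with weights proportional to
`a Φ₁(U)` and `b Φ₂(U)`, which lies in `U` because `U` is convex.
-/

open Finsupp Set

section LinearOrderedField

variable {𝕜 : Type*} [Field 𝕜] [LinearOrder 𝕜] [IsStrictOrderedRing 𝕜]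

lemma Finsupp.support_smul_add_smul_of_nonneg {α : Type*} [DecidableEq α] {f g : α →₀ 𝕜}
    (hf : 0 ≤ f) (hg : 0 ≤ g) {a b : 𝕜} (ha : 0 < a) (hb : 0 < b) :
    (a • f + b • g).support = f.support ∪ g.support := by
  ext x
  have hfx := le_def.1 hf x
  have hgx := le_def.1 hg x
  simp only [coe_zero, Pi.zero_apply] at hfx hgx
  simp only [Finset.mem_union, mem_support_iff, add_apply, smul_apply, smul_eq_mul, Ne,
    add_eq_zero_iff_of_nonneg (mul_nonneg ha.le hfx) (mul_nonneg hb.le hgx), mul_eq_zero,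
    ha.ne', hb.ne', false_or]
  tauto

lemma Convex.div_add_smul_div_add_mem {E : Type*} [AddCommGroup E] [Module 𝕜 E] {s : Set E}
    (hs : Convex 𝕜 s) {x y : E} {p q : 𝕜} (hp : 0 ≤ p) (hq : 0 ≤ q) (hpq : p + q ≠ 0)
    (hx : p ≠ 0 → x ∈ s) (hy : q ≠ 0 → y ∈ s) :
    (p / (p + q)) • x + (q / (p + q)) • y ∈ s := by
  rcases eq_or_ne p 0 with rfl | hp₀
  · rw [zero_add] at hpq ⊢
    simpa [div_self hpq] using hy hpq
  rcases eq_or_ne q 0 with rfl | hq₀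
  · rw [add_zero] at hpq ⊢
    simpa [div_self hpq] using hx hpq
  exact convex_iff_div.1 hs (hx hp₀) (hy hq₀) hp hq (lt_of_le_of_ne (add_nonneg hp hq) hpq.symm)

lemma add_smul_div_add_smul_div_add {E : Type*} [AddCommGroup E] [Module 𝕜 E] {p q : 𝕜}
    (hp : 0 ≤ p) (hq : 0 ≤ q) (x y : E) :
    (p + q) • ((p / (p + q)) • x + (q / (p + q)) • y) = p • x + q • y := by
  rcases eq_or_ne (p + q) 0 with hpq | hpq
  · obtain rfl : p = 0 := by linarith
    obtain rfl : q = 0 := by linarith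
    simp
  · rw [smul_add, smul_smul, smul_smul, mul_div_cancel₀ _ hpq, mul_div_cancel₀ _ hpq]

end LinearOrderedField

lemma InC.convex {X : Type*} {U : Set (X →₀ ℝ)} (hU : InC U) : Convex ℝ U := by
  obtain ⟨-, -, F, rfl⟩ := hU
  exact convex_convexHull ℝ _

lemma InCC.convex {X : Type*} {S : Set (Set (X →₀ ℝ) →₀ ℝ)} (hS : InCC S) : Convex ℝ S := by
  obtain ⟨-, -, F, rfl⟩ := hS
  exact convex_convexHull ℝ _

lemma IsDistC.mem_Ici_inter_supported {X : Type*} {Φ : Set (X →₀ ℝ) →₀ ℝ} (hΦ : IsDistC Φ) :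
    Φ ∈ Ici 0 ∩ ↑(supported ℝ ℝ {U : Set (X →₀ ℝ) | Convex ℝ U}) :=
  ⟨le_def.2 hΦ.1.1, fun U hU => (hΦ.2 U hU).convex⟩

section mu

variable {X : Type*}

lemma mem_mu_iff {S : Set (Set (X →₀ ℝ) →₀ ℝ)} {d : X →₀ ℝ} :
    d ∈ mu S ↔ ∃ Φ ∈ S, ∃ g : Set (X →₀ ℝ) → (X →₀ ℝ),
      (∀ U ∈ Φ.support, g U ∈ U) ∧ d = linearCombination ℝ g Φ := by
  simp only [mu, mem_iUnion, mem_ofPred_eq, linearCombination_apply, Finsupp.sum, exists_prop]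

lemma mu_mono {S T : Set (Set (X →₀ ℝ) →₀ ℝ)} (h : S ⊆ T) : mu S ⊆ mu T :=
  biUnion_subset_biUnion_left h

lemma convex_mu {S : Set (Set (X →₀ ℝ) →₀ ℝ)} (hS : Convex ℝ S)
    (hS' : S ⊆ Ici 0 ∩ ↑(supported ℝ ℝ {U : Set (X →₀ ℝ) | Convex ℝ U})) : Convex ℝ (mu S) := by
  classical
  rintro _ hd₁ _ hd₂ a b ha hb hab
  obtain ⟨Φ₁, hΦ₁, g₁, hg₁, rfl⟩ := mem_mu_iff.1 hd₁
  obtain ⟨Φ₂, hΦ₂, g₂, hg₂, rfl⟩ := mem_mu_iff.1 hd₂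
  have hΦ : a • Φ₁ + b • Φ₂ ∈ S := hS hΦ₁ hΦ₂ ha hb hab
  have hp : ∀ U, 0 ≤ a * Φ₁ U := fun U => mul_nonneg ha (le_def.1 (hS' hΦ₁).1 U)
  have hq : ∀ U, 0 ≤ b * Φ₂ U := fun U => mul_nonneg hb (le_def.1 (hS' hΦ₂).1 U)
  have hΦU : ∀ U, (a • Φ₁ + b • Φ₂) U = a * Φ₁ U + b * Φ₂ U := fun _ => rfl
  let g U := (a * Φ₁ U / (a * Φ₁ U + b * Φ₂ U)) • g₁ U +
    (b * Φ₂ U / (a * Φ₁ U + b * Φ₂ U)) • g₂ U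
  refine mem_mu_iff.2 ⟨_, hΦ, g, fun U hU => ?_, ?_⟩
  · exact ((hS' hΦ).2 hU).div_add_smul_div_add_mem (hp U) (hq U) (mem_support_iff.1 hU)
      (fun h => hg₁ U (mem_support_iff.2 (right_ne_zero_of_mul h)))
      (fun h => hg₂ U (mem_support_iff.2 (right_ne_zero_of_mul h)))
  · set T := Φ₁.support ∪ Φ₂.support
    have hT : ∀ {Ψ : Set (X →₀ ℝ) →₀ ℝ}, Ψ.support ⊆ T → Ψ ∈ supported ℝ ℝ (T : Set _) :=
      fun h => (mem_supported ℝ _).2 (Finset.coe_subset.2 h)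
    have hTΦ : (a • Φ₁ + b • Φ₂).support ⊆ T :=
      support_add.trans (Finset.union_subset_union support_smul support_smul)
    rw [linearCombination_apply_of_mem_supported ℝ (hT hTΦ),
      linearCombination_apply_of_mem_supported ℝ (hT Finset.subset_union_left),
      linearCombination_apply_of_mem_supported ℝ (hT Finset.subset_union_right),
      Finset.smul_sum, Finset.smul_sum, ← Finset.sum_add_distrib]
    refine Finset.sum_congr rfl fun U _ => ?_
    rw [hΦU, add_smul_div_add_smul_div_add (hp U) (hq U), mul_smul, mul_smul]

lemma mu_convexHull_union_subset {S₁ S₂ : Set (Set (X →₀ ℝ) →₀ ℝ)} (hS₁ : Convex ℝ S₁)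
    (hS₂ : Convex ℝ S₂) (hne₁ : S₁.Nonempty) (hne₂ : S₂.Nonempty) (h₀ : S₁ ∪ S₂ ⊆ Ici 0) :
    mu (convexHull ℝ (S₁ ∪ S₂)) ⊆ convexHull ℝ (mu S₁ ∪ mu S₂) := by
  classical
  rintro _ hd
  obtain ⟨Φ, hΦ, g, hg, rfl⟩ := mem_mu_iff.1 hd
  rw [hS₁.convexHull_union hS₂ hne₁ hne₂, mem_convexJoin] at hΦ
  obtain ⟨Ψ₁, hΨ₁, Ψ₂, hΨ₂, hΦ⟩ := hΦ
  rw [← insert_endpoints_openSegment] at hΦ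
  rcases hΦ with rfl | rfl | ⟨a, b, ha, hb, hab, rfl⟩
  · exact subset_convexHull ℝ _ (mem_union_left _ (mem_mu_iff.2 ⟨_, hΨ₁, g, hg, rfl⟩))
  · exact subset_convexHull ℝ _ (mem_union_right _ (mem_mu_iff.2 ⟨_, hΨ₂, g, hg, rfl⟩))
  · have hsupp := support_smul_add_smul_of_nonneg (h₀ (Or.inl hΨ₁)) (h₀ (Or.inr hΨ₂)) ha hb
    have hd₁ : linearCombination ℝ g Ψ₁ ∈ mu S₁ := mem_mu_iff.2
      ⟨Ψ₁, hΨ₁, g, fun U hU => hg U (hsupp ▸ Finset.mem_union_left _ hU), rfl⟩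
    have hd₂ : linearCombination ℝ g Ψ₂ ∈ mu S₂ := mem_mu_iff.2
      ⟨Ψ₂, hΨ₂, g, fun U hU => hg U (hsupp ▸ Finset.mem_union_right _ hU), rfl⟩
    rw [map_add, map_smul, map_smul]
    exact convex_convexHull ℝ _ (subset_convexHull ℝ _ (mem_union_left _ hd₁))
      (subset_convexHull ℝ _ (mem_union_right _ hd₂)) ha.le hb.le hab

end mu

/-- `μ` preserves convex union: `μ(S₁ ⊕ S₂) = μ(S₁) ⊕ μ(S₂)`. -/
theorem mu_oplus {X : Type*} (S₁ S₂ : Set (Set (X →₀ ℝ) →₀ ℝ))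
    (h₁ : InCC S₁) (h₂ : InCC S₂) :
    mu (convexHull ℝ (S₁ ∪ S₂)) = convexHull ℝ (mu S₁ ∪ mu S₂) := by
  have hadm : S₁ ∪ S₂ ⊆ Ici 0 ∩ ↑(supported ℝ ℝ {U : Set (X →₀ ℝ) | Convex ℝ U}) :=
    union_subset (fun Φ hΦ => IsDistC.mem_Ici_inter_supported (h₁.2.1 Φ hΦ))
      (fun Φ hΦ => IsDistC.mem_Ici_inter_supported (h₂.2.1 Φ hΦ))
  refine subset_antisymm (mu_convexHull_union_subset h₁.convex h₂.convex h₁.1 h₂.1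
    (hadm.trans inter_subset_left)) (convexHull_min ?_ (convex_mu (convex_convexHull ℝ _) ?_))
  · exact union_subset (mu_mono (subset_union_left.trans (subset_convexHull ℝ _)))
      (mu_mono (subset_union_right.trans (subset_convexHull ℝ _)))
  · exact convexHull_min hadm ((convex_Ici 0).inter (Submodule.convex _))
end

section
/- The multiplication μ : CCX → CX of the convex-sets-of-distributions monad preserves Minkowski p-sums: μ(S₁ +ₚ S₂) = μ(S₁) +ₚ μ(S₂) for all S₁, S₂ ∈ CC(X) and p ∈ (0,1). -/
lemma comb_apply {Y : Type*} (Φ₁ Φ₂ : Y →₀ ℝ) (p : ℝ) (y : Y) :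
    (p • Φ₁ + (1 - p) • Φ₂) y = p * Φ₁ y + (1 - p) * Φ₂ y := by
  simp

lemma supp_comb {Y : Type*} [DecidableEq Y] (Φ₁ Φ₂ : Y →₀ ℝ) (h1 : ∀ y, 0 ≤ Φ₁ y)
    (h2 : ∀ y, 0 ≤ Φ₂ y) {p : ℝ} (hp0 : 0 < p) (hp1 : p < 1) :
    (p • Φ₁ + (1 - p) • Φ₂).support = Φ₁.support ∪ Φ₂.support := by
  ext y
  simp only [Finsupp.mem_support_iff, Finset.mem_union, comb_apply]
  constructor
  · intro h
    by_contra hc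
    push_neg at hc
    rw [hc.1, hc.2] at h
    simp at h
  · intro h hc
    have h1y := h1 y
    have h2y := h2 y
    have hp1' : (0:ℝ) < 1 - p := by linarith
    rcases h with h | h
    · have : 0 < p * Φ₁ y := mul_pos hp0 (lt_of_le_of_ne h1y (Ne.symm h))
      nlinarith [mul_nonneg hp1'.le h2y]
    · have : 0 < (1 - p) * Φ₂ y := mul_pos hp1' (lt_of_le_of_ne h2y (Ne.symm h))
      nlinarith [mul_nonneg hp0.le h1y]

/-- `μ` preserves Minkowski `p`-sums: `μ(S₁ +ₚ S₂) = μ(S₁) +ₚ μ(S₂)`. -/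
theorem mu_psum {X : Type*} (S₁ S₂ : Set (Set (X →₀ ℝ) →₀ ℝ))
    (h₁ : InCC S₁) (h₂ : InCC S₂) (p : ℝ) (hp : p ∈ Set.Ioo (0:ℝ) 1) :
    mu (psum p S₁ S₂) = psum p (mu S₁) (mu S₂) := by
  classical
  obtain ⟨hp0, hp1⟩ := hp
  ext d
  simp only [mu, psum, Set.mem_iUnion, Set.mem_setOf_eq, exists_prop]
  constructor
  · rintro ⟨Φ, ⟨Φ₁, hΦ₁, Φ₂, hΦ₂, rfl⟩, g, hg, rfl⟩
    have hn1 : ∀ y, 0 ≤ Φ₁ y := (h₁.2.1 Φ₁ hΦ₁).1.1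
    have hn2 : ∀ y, 0 ≤ Φ₂ y := (h₂.2.1 Φ₂ hΦ₂).1.1
    have hs : (p • Φ₁ + (1 - p) • Φ₂).support = Φ₁.support ∪ Φ₂.support :=
      supp_comb Φ₁ Φ₂ hn1 hn2 hp0 hp1
    refine ⟨∑ U ∈ Φ₁.support, Φ₁ U • g U, ⟨Φ₁, hΦ₁, g,
        fun U hU => hg U (by rw [hs]; exact Finset.mem_union_left _ hU), rfl⟩,
      ∑ U ∈ Φ₂.support, Φ₂ U • g U, ⟨Φ₂, hΦ₂, g,
        fun U hU => hg U (by rw [hs]; exact Finset.mem_union_right _ hU), rfl⟩, ?_⟩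
    rw [Finset.smul_sum, Finset.smul_sum]
    have e1 : ∑ U ∈ Φ₁.support, p • Φ₁ U • g U
        = ∑ U ∈ (p • Φ₁ + (1 - p) • Φ₂).support, p • Φ₁ U • g U := by
      refine Finset.sum_subset (by rw [hs]; exact Finset.subset_union_left) ?_
      intro U _ hU
      rw [Finsupp.notMem_support_iff.mp hU]
      simp
    have e2 : ∑ U ∈ Φ₂.support, (1 - p) • Φ₂ U • g U
        = ∑ U ∈ (p • Φ₁ + (1 - p) • Φ₂).support, (1 - p) • Φ₂ U • g U := by
      refine Finset.sum_subset (by rw [hs]; exact Finset.subset_union_right) ?_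
      intro U _ hU
      rw [Finsupp.notMem_support_iff.mp hU]
      simp
    rw [e1, e2, ← Finset.sum_add_distrib]
    refine Finset.sum_congr rfl fun U _ => ?_
    rw [comb_apply]
    rw [add_smul]
    module
  · rintro ⟨d₁, ⟨Φ₁, hΦ₁, g₁, hg₁, rfl⟩, d₂, ⟨Φ₂, hΦ₂, g₂, hg₂, rfl⟩, rfl⟩
    have hn1 : ∀ y, 0 ≤ Φ₁ y := (h₁.2.1 Φ₁ hΦ₁).1.1
    have hn2 : ∀ y, 0 ≤ Φ₂ y := (h₂.2.1 Φ₂ hΦ₂).1.1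
    have hs : (p • Φ₁ + (1 - p) • Φ₂).support = Φ₁.support ∪ Φ₂.support :=
      supp_comb Φ₁ Φ₂ hn1 hn2 hp0 hp1
    set Φ := p • Φ₁ + (1 - p) • Φ₂ with hΦdef
    have hΦpos : ∀ U ∈ Φ.support, 0 < Φ U := by
      intro U hU
      have hne := Finsupp.mem_support_iff.mp hU
      have : 0 ≤ Φ U := by
        rw [hΦdef, comb_apply]
        have := hn1 U; have := hn2 U
        nlinarith
      exact lt_of_le_of_ne this (Ne.symm hne)
    refine ⟨Φ, ⟨Φ₁, hΦ₁, Φ₂, hΦ₂, rfl⟩,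
      fun U => if Φ₁ U = 0 then g₂ U else if Φ₂ U = 0 then g₁ U
        else (p * Φ₁ U / Φ U) • g₁ U + ((1 - p) * Φ₂ U / Φ U) • g₂ U, ?_, ?_⟩
    · intro U hU
      have hUpos := hΦpos U hU
      have hΦU : Φ U = p * Φ₁ U + (1 - p) * Φ₂ U := comb_apply Φ₁ Φ₂ p U
      by_cases h1 : Φ₁ U = 0
      · simp only [h1, if_pos]
        have h2 : Φ₂ U ≠ 0 := by
          intro h2; rw [hΦU, h1, h2] at hUpos; simp at hUpos
        exact hg₂ U (Finsupp.mem_support_iff.mpr h2)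
      · simp only [h1, if_neg, if_false]
        by_cases h2 : Φ₂ U = 0
        · simp only [h2, if_pos]
          exact hg₁ U (Finsupp.mem_support_iff.mpr h1)
        · simp only [h2, if_neg, if_false]
          have hconv : Convex ℝ U := by
            obtain ⟨_, _, F, hF⟩ := (h₁.2.1 Φ₁ hΦ₁).2 U (Finsupp.mem_support_iff.mpr h1)
            rw [hF]; exact convex_convexHull ℝ _
          have ha : 0 ≤ p * Φ₁ U / Φ U :=
            div_nonneg (mul_nonneg hp0.le (hn1 U)) hUpos.le
          have hb : 0 ≤ (1 - p) * Φ₂ U / Φ U :=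
            div_nonneg (mul_nonneg (by linarith) (hn2 U)) hUpos.le
          have hab : p * Φ₁ U / Φ U + (1 - p) * Φ₂ U / Φ U = 1 := by
            field_simp
            rw [hΦU]
          exact hconv (hg₁ U (Finsupp.mem_support_iff.mpr h1))
            (hg₂ U (Finsupp.mem_support_iff.mpr h2)) ha hb hab
    · have e1 : ∑ U ∈ Φ₁.support, p • Φ₁ U • g₁ U
          = ∑ U ∈ Φ.support, p • Φ₁ U • g₁ U := by
        refine Finset.sum_subset (by rw [hs]; exact Finset.subset_union_left) ?_
        intro U _ hU
        rw [Finsupp.notMem_support_iff.mp hU]; simp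
      have e2 : ∑ U ∈ Φ₂.support, (1 - p) • Φ₂ U • g₂ U
          = ∑ U ∈ Φ.support, (1 - p) • Φ₂ U • g₂ U := by
        refine Finset.sum_subset (by rw [hs]; exact Finset.subset_union_right) ?_
        intro U _ hU
        rw [Finsupp.notMem_support_iff.mp hU]; simp
      rw [Finset.smul_sum, Finset.smul_sum, e1, e2, ← Finset.sum_add_distrib]
      refine Finset.sum_congr rfl fun U hU => ?_
      have hUpos := hΦpos U hU
      have hΦU : Φ U = p * Φ₁ U + (1 - p) * Φ₂ U := comb_apply Φ₁ Φ₂ p U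
      by_cases h1 : Φ₁ U = 0
      · simp only [h1, if_pos]
        rw [hΦU, h1]
        module
      · simp only [h1, if_neg, if_false]
        by_cases h2 : Φ₂ U = 0
        · simp only [h2, if_pos]
          rw [hΦU, h2]
          module
        · simp only [h2, if_neg, if_false]
          rw [smul_add, smul_smul, smul_smul, smul_smul, smul_smul]
          have hne : Φ U ≠ 0 := hUpos.ne'
          congr 1 <;> congr 1 <;> field_simp <;> ring
end

section
/- In any convex semilattice, the convexity law holds: for all elements x, y and all p ∈ (0,1), x ⊕ y = x ⊕ y ⊕ (x +ₚ y). -/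
/-- A convex semilattice: a semilattice `⊕` together with barycentric operations `+ₚ`
(for `p ∈ (0,1)`) satisfying the barycentric algebra axioms and distributivity. -/
class ConvexSemilattice (A : Type*) where
  sup : A → A → A
  pad : ℝ → A → A → A
  sup_assoc : ∀ x y z : A, sup (sup x y) z = sup x (sup y z)
  sup_comm : ∀ x y : A, sup x y = sup y x
  sup_idem : ∀ x : A, sup x x = x
  pad_idem : ∀ p ∈ Set.Ioo (0:ℝ) 1, ∀ x : A, pad p x x = x
  pad_comm : ∀ p ∈ Set.Ioo (0:ℝ) 1, ∀ x y : A, pad p x y = pad (1 - p) y x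
  pad_assoc : ∀ p ∈ Set.Ioo (0:ℝ) 1, ∀ q ∈ Set.Ioo (0:ℝ) 1, ∀ x y z : A,
    pad p (pad q x y) z = pad (p * q) x (pad (p * (1 - q) / (1 - p * q)) y z)
  distrib : ∀ p ∈ Set.Ioo (0:ℝ) 1, ∀ x y z : A,
    pad p (sup x y) z = sup (pad p x z) (pad p y z)

open ConvexSemilattice

/-- The convexity law: `x ⊕ y = x ⊕ y ⊕ (x +ₚ y)`. -/
theorem convexity_law {A : Type*} [ConvexSemilattice A] (x y : A)
    (p : ℝ) (hp : p ∈ Set.Ioo (0:ℝ) 1) :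
    sup x y = sup (sup x y) (pad p x y) := by
  obtain ⟨hp0, hp1⟩ := hp
  have hp : p ∈ Set.Ioo (0:ℝ) 1 := ⟨hp0, hp1⟩
  have h1p : (1 - p) ∈ Set.Ioo (0:ℝ) 1 := ⟨by linarith, by linarith⟩
  haveI ha : Std.Associative (sup (self := ‹ConvexSemilattice A›)) := ⟨sup_assoc⟩
  haveI hc : Std.Commutative (sup (self := ‹ConvexSemilattice A›)) := ⟨sup_comm⟩
  have hyx : pad (1 - (1 - p)) x y = pad p x y := by ring_nf
  have key : sup x y = sup (sup (sup x y) (pad p x y)) (pad (1 - p) x y) := by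
    calc sup x y = pad p (sup x y) (sup x y) := (pad_idem p hp _).symm
      _ = sup (pad p x (sup x y)) (pad p y (sup x y)) := distrib p hp _ _ _
      _ = sup (pad (1 - p) (sup x y) x) (pad (1 - p) (sup x y) y) := by
          rw [pad_comm p hp x, pad_comm p hp y]
      _ = sup (sup (pad (1 - p) x x) (pad (1 - p) y x))
            (sup (pad (1 - p) x y) (pad (1 - p) y y)) := by
          rw [distrib _ h1p, distrib _ h1p]
      _ = sup (sup x (pad p x y)) (sup (pad (1 - p) x y) y) := by
          rw [pad_idem _ h1p, pad_idem _ h1p, pad_comm _ h1p y x, hyx]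
      _ = sup (sup (sup x y) (pad p x y)) (pad (1 - p) x y) := by ac_rfl
  calc sup x y = sup (sup (sup x y) (pad p x y)) (pad (1 - p) x y) := key
    _ = sup (sup (sup x y) (sup (pad p x y) (pad p x y))) (pad (1 - p) x y) := by
        rw [ConvexSemilattice.sup_idem]
    _ = sup (sup (sup (sup x y) (pad p x y)) (pad (1 - p) x y)) (pad p x y) := by ac_rfl
    _ = sup (sup x y) (pad p x y) := by rw [← key]
end

section
/- In any convex semilattice, for all x, y and p ∈ (0,1): x ⊕ y = x ⊕ (y +ₚ x) ⊕ (x +ₚ y) ⊕ y. -/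
open ConvexSemilattice

/-- `x ⊕ y = x ⊕ (y +ₚ x) ⊕ (x +ₚ y) ⊕ y` in any convex semilattice. -/
theorem sup_expand {A : Type*} [ConvexSemilattice A] (x y : A)
    (p : ℝ) (hp : p ∈ Set.Ioo (0:ℝ) 1) :
    sup x y = sup (sup (sup x (pad p y x)) (pad p x y)) y := by
  obtain ⟨hp0, hp1⟩ := hp
  have hp : p ∈ Set.Ioo (0:ℝ) 1 := ⟨hp0, hp1⟩
  have hp' : (1 - p) ∈ Set.Ioo (0:ℝ) 1 := ⟨by linarith, by linarith⟩
  have hpp : (1:ℝ) - (1 - p) = p := by ring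
  have h1 : pad p x (sup x y) = sup x (pad p x y) := by
    rw [pad_comm p hp, distrib (1-p) hp', pad_idem (1-p) hp', pad_comm (1-p) hp', hpp]
  have h2 : pad p y (sup x y) = sup (pad p y x) y := by
    rw [pad_comm p hp, distrib (1-p) hp', pad_idem (1-p) hp', pad_comm (1-p) hp', hpp]
  conv_lhs => rw [← pad_idem p hp (sup x y), distrib p hp, h1, h2]
  rw [← ConvexSemilattice.sup_assoc, ConvexSemilattice.sup_assoc x (pad p x y), ConvexSemilattice.sup_comm (pad p x y), ← ConvexSemilattice.sup_assoc]
end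

section
/- The term rewriting system with rules (t₁ ⊕ t₂) +ₚ t₃ ⇝ (t₁ +ₚ t₃) ⊕ (t₂ +ₚ t₃) and t₁ +ₚ (t₂ ⊕ t₃) ⇝ (t₁ +ₚ t₂) ⊕ (t₁ +ₚ t₃) on terms built from variables, ⊕, and +ₚ terminates, and its normal forms are exactly the terms in nondeterministic-probabilistic form. Consequently, every term over the signature {⊕, +ₚ (p ∈ (0,1))} is equal, modulo the convex semilattice axioms, to a term of the form t₁ ⊕ ⋯ ⊕ tₙ where each tᵢ contains only the operations +ₚ. -/
/-- Probabilities in `(0,1)`, indexing the operations `+ₚ`. -/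
def Prob : Type := {p : ℝ // p ∈ Set.Ioo (0:ℝ) 1}

/-- Terms over the signature `{⊕, +ₚ (p ∈ (0,1))}` with variables in `X`. -/
inductive Term (X : Type*) where
  | var : X → Term X
  | sup : Term X → Term X → Term X
  | pad : Prob → Term X → Term X → Term X

namespace Term

/-- One-step rewriting: the two distributivity rules, applied anywhere in a term. -/
inductive Rw {X : Type*} : Term X → Term X → Prop
  | distl (p : Prob) (t₁ t₂ t₃ : Term X) :
      Rw (pad p (sup t₁ t₂) t₃) (sup (pad p t₁ t₃) (pad p t₂ t₃))
  | distr (p : Prob) (t₁ t₂ t₃ : Term X) :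
      Rw (pad p t₁ (sup t₂ t₃)) (sup (pad p t₁ t₂) (pad p t₁ t₃))
  | sup_left {a a' : Term X} (b : Term X) : Rw a a' → Rw (sup a b) (sup a' b)
  | sup_right (a : Term X) {b b' : Term X} : Rw b b' → Rw (sup a b) (sup a b')
  | pad_left (p : Prob) {a a' : Term X} (b : Term X) : Rw a a' → Rw (pad p a b) (pad p a' b)
  | pad_right (p : Prob) (a : Term X) {b b' : Term X} : Rw b b' → Rw (pad p a b) (pad p a b')

/-- Purely probabilistic terms: built from variables and the `+ₚ` only. -/
inductive IsP {X : Type*} : Term X → Prop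
  | var (x : X) : IsP (var x)
  | pad (p : Prob) {a b : Term X} : IsP a → IsP b → IsP (pad p a b)

/-- Nondeterministic-probabilistic (n-p) form: an `⊕`-combination of purely
probabilistic terms. -/
inductive IsNP {X : Type*} : Term X → Prop
  | of_p {t : Term X} : IsP t → IsNP t
  | sup {a b : Term X} : IsNP a → IsNP b → IsNP (sup a b)

/-- Equality modulo the convex semilattice axioms: the congruence generated by the
semilattice axioms for `⊕`, the barycentric axioms for `+ₚ`, and distributivity. -/
inductive Eqv {X : Type*} : Term X → Term X → Prop
  | refl (t : Term X) : Eqv t t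
  | symm {a b : Term X} : Eqv a b → Eqv b a
  | trans {a b c : Term X} : Eqv a b → Eqv b c → Eqv a c
  | sup_congr {a a' b b' : Term X} : Eqv a a' → Eqv b b' → Eqv (sup a b) (sup a' b')
  | pad_congr (p : Prob) {a a' b b' : Term X} :
      Eqv a a' → Eqv b b' → Eqv (pad p a b) (pad p a' b')
  | sup_assoc (a b c : Term X) : Eqv (sup (sup a b) c) (sup a (sup b c))
  | sup_comm (a b : Term X) : Eqv (sup a b) (sup b a)
  | sup_idem (a : Term X) : Eqv (sup a a) a
  | pad_idem (p : Prob) (a : Term X) : Eqv (pad p a a) a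
  | pad_comm (p q : Prob) (a b : Term X) (h : q.1 = 1 - p.1) :
      Eqv (pad p a b) (pad q b a)
  | pad_assoc (p q r s : Prob) (a b c : Term X)
      (hr : r.1 = p.1 * q.1) (hs : s.1 = p.1 * (1 - q.1) / (1 - p.1 * q.1)) :
      Eqv (pad p (pad q a b) c) (pad r a (pad s b c))
  | distrib (p : Prob) (a b c : Term X) :
      Eqv (pad p (sup a b) c) (sup (pad p a c) (pad p b c))

end Term

namespace Term

/-- A termination measure. -/
def mu {X : Type*} : Term X → ℕ
  | var _ => 2
  | sup a b => mu a + mu b + 1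
  | pad _ a b => mu a * mu b

theorem two_le_mu {X : Type*} (t : Term X) : 2 ≤ mu t := by
  induction t with
  | var x => simp [mu]
  | sup a b iha ihb => simp [mu]; omega
  | pad p a b iha ihb =>
      simp only [mu]
      calc 2 ≤ 2 * 2 := by norm_num
        _ ≤ mu a * mu b := Nat.mul_le_mul iha ihb

theorem rw_mu_lt {X : Type*} {t t' : Term X} (h : Rw t t') : mu t' < mu t := by
  induction h with
  | distl p t₁ t₂ t₃ =>
      have h3 := two_le_mu t₃
      simp only [mu]; nlinarith
  | distr p t₁ t₂ t₃ =>
      have h1 := two_le_mu t₁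
      simp only [mu]; nlinarith
  | sup_left b _ ih => simp only [mu]; omega
  | sup_right a _ ih => simp only [mu]; omega
  | pad_left p b _ ih =>
      have hb := two_le_mu b
      simp only [mu]
      exact Nat.mul_lt_mul_of_lt_of_le ih le_rfl (by omega)
  | pad_right p a _ ih =>
      have ha := two_le_mu a
      simp only [mu]
      exact Nat.mul_lt_mul_of_le_of_lt le_rfl ih (by omega)

theorem rw_wf {X : Type*} : WellFounded (fun a b : Term X => Rw b a) :=
  Subrelation.wf (fun h => rw_mu_lt h) (InvImage.wf mu Nat.lt_wfRel.wf)

theorem not_np_of_rw {X : Type*} {t t' : Term X} (h : Rw t t') : ¬ IsNP t := by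
  induction h with
  | distl p t₁ t₂ t₃ =>
      rintro (h | h)
      · rcases h with _ | ⟨_, ha, _⟩; rcases ha
  | distr p t₁ t₂ t₃ =>
      rintro (h | h)
      · rcases h with _ | ⟨_, _, hb⟩; rcases hb
  | sup_left b _ ih =>
      rintro (h | ⟨ha, _⟩)
      · rcases h
      · exact ih ha
  | sup_right a _ ih =>
      rintro (h | ⟨_, hb⟩)
      · rcases h
      · exact ih hb
  | pad_left p b _ ih =>
      rintro (h | h)
      rcases h with _ | ⟨_, ha, _⟩
      exact ih (IsNP.of_p ha)
  | pad_right p a _ ih =>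
      rintro (h | h)
      rcases h with _ | ⟨_, _, hb⟩
      exact ih (IsNP.of_p hb)

theorem np_or_rw {X : Type*} (t : Term X) : IsNP t ∨ ∃ t', Rw t t' := by
  induction t with
  | var x => exact Or.inl (IsNP.of_p (IsP.var x))
  | sup a b iha ihb =>
      rcases iha with ha | ⟨a', ha'⟩
      · rcases ihb with hb | ⟨b', hb'⟩
        · exact Or.inl (ha.sup hb)
        · exact Or.inr ⟨_, Rw.sup_right a hb'⟩
      · exact Or.inr ⟨_, Rw.sup_left b ha'⟩
  | pad p a b iha ihb =>
      rcases iha with ha | ⟨a', ha'⟩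
      · rcases ihb with hb | ⟨b', hb'⟩
        · cases ha with
          | of_p hpa =>
              cases hb with
              | of_p hpb => exact Or.inl (IsNP.of_p (hpa.pad p hpb))
              | sup => exact Or.inr ⟨_, Rw.distr p ..⟩
          | sup => exact Or.inr ⟨_, Rw.distl p ..⟩
        · exact Or.inr ⟨_, Rw.pad_right p a hb'⟩
      · exact Or.inr ⟨_, Rw.pad_left p b ha'⟩

theorem eqv_of_rw {X : Type*} {t t' : Term X} (h : Rw t t') : Eqv t t' := by
  induction h with
  | distl p t₁ t₂ t₃ => exact Eqv.distrib p t₁ t₂ t₃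
  | distr p t₁ t₂ t₃ =>
      have hp : (0:ℝ) < p.1 ∧ p.1 < 1 := ⟨p.2.1, p.2.2⟩
      set q : Prob := ⟨1 - p.1, by constructor <;> simp <;> linarith [hp.1, hp.2]⟩ with hq
      have hq1 : q.1 = 1 - p.1 := rfl
      have hp1 : p.1 = 1 - q.1 := by rw [hq1]; ring
      refine Eqv.trans (Eqv.pad_comm p q _ _ hq1) ?_
      refine Eqv.trans (Eqv.distrib q t₂ t₃ t₁) ?_
      exact Eqv.sup_congr (Eqv.pad_comm q p _ _ hp1) (Eqv.pad_comm q p _ _ hp1)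
  | sup_left b _ ih => exact Eqv.sup_congr ih (Eqv.refl b)
  | sup_right a _ ih => exact Eqv.sup_congr (Eqv.refl a) ih
  | pad_left p b _ ih => exact Eqv.pad_congr p ih (Eqv.refl b)
  | pad_right p a _ ih => exact Eqv.pad_congr p (Eqv.refl a) ih

end Term

open Term in
/-- The rewriting system terminates, its normal forms are exactly the terms in n-p
form, and consequently every term is equal modulo the convex semilattice axioms to a
term in n-p form. -/
theorem rewriting_np_form {X : Type*} :
    WellFounded (fun a b : Term X => Rw b a) ∧
    (∀ t : Term X, (¬ ∃ t' : Term X, Rw t t') ↔ IsNP t) ∧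
    (∀ t : Term X, ∃ t' : Term X, IsNP t' ∧ Eqv t t') := by
  refine ⟨rw_wf, fun t => ⟨fun h => ?_, fun hnp ⟨t', ht'⟩ => not_np_of_rw ht' hnp⟩, ?_⟩
  · rcases np_or_rw t with hnp | hr
    · exact hnp
    · exact absurd hr h
  · intro t
    induction t using rw_wf.induction with
    | _ t ih =>
      rcases np_or_rw t with hnp | ⟨t', hr⟩
      · exact ⟨t, hnp, Eqv.refl t⟩
      · obtain ⟨u, hu, he⟩ := ih t' hr
        exact ⟨u, hu, (eqv_of_rw hr).trans he⟩
end

section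
/- In any convex semilattice, if an element t is a convex combination of t₁,…,tₙ (i.e., t = (⋯(t₁ +_{p₁} t₂) +_{p₂} ⋯) +_{p_{n−1}} tₙ for some p₁,…,p_{n−1} ∈ (0,1)), then t₁ ⊕ ⋯ ⊕ tₙ = t₁ ⊕ ⋯ ⊕ tₙ ⊕ t. -/
open ConvexSemilattice

/-!
In a convex semilattice `x ⊕ y` absorbs `x +ₚ y`: expanding `x ⊕ y = (x ⊕ y) +ₚ (x ⊕ y)` by
distributivity on both sides gives `x ⊕ (x +ₚ y) ⊕ (y +ₚ x) ⊕ y`, which already contains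
`x +ₚ y`. Hence if `s` absorbs `c`, then `s ⊕ t` absorbs `c +ₚ t`, and induction along the
list shows that the running join absorbs the running convex combination.
-/

namespace ConvexSemilattice

variable {A : Type*} [ConvexSemilattice A]

instance : Std.Associative (sup (A := A)) := ⟨sup_assoc⟩
instance : Std.Commutative (sup (A := A)) := ⟨sup_comm⟩

theorem pad_sup_right {p : ℝ} (hp : p ∈ Set.Ioo (0:ℝ) 1) (x y z : A) :
    pad p x (sup y z) = sup (pad p x y) (pad p x z) := by
  have hp' : 1 - p ∈ Set.Ioo (0:ℝ) 1 := ⟨by linarith [hp.2], by linarith [hp.1]⟩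
  rw [pad_comm p hp, distrib (1 - p) hp', ← pad_comm p hp, ← pad_comm p hp]

theorem sup_sup_pad_self {p : ℝ} (hp : p ∈ Set.Ioo (0:ℝ) 1) (x y : A) :
    sup (sup x y) (pad p x y) = sup x y := by
  have expand : sup x y = sup (sup x (pad p x y)) (sup (pad p y x) y) := by
    conv_lhs => rw [← pad_idem p hp (sup x y)]
    rw [distrib p hp, pad_sup_right hp, pad_sup_right hp, pad_idem p hp, pad_idem p hp]
  calc sup (sup x y) (pad p x y)
      = sup (sup (sup x (pad p x y)) (sup (pad p y x) y)) (pad p x y) := by rw [← expand]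
    _ = sup (sup x (sup (pad p x y) (pad p x y))) (sup (pad p y x) y) := by ac_rfl
    _ = sup x y := by rw [sup_idem, ← expand]

theorem sup_sup_pad_of_sup_eq {p : ℝ} (hp : p ∈ Set.Ioo (0:ℝ) 1) {s c : A}
    (hsc : sup s c = s) (t : A) : sup (sup s t) (pad p c t) = sup s t :=
  calc sup (sup s t) (pad p c t)
      = sup s (sup (sup c t) (pad p c t)) := by
        conv_lhs => rw [← hsc]
        ac_rfl
    _ = sup s t := by
        rw [sup_sup_pad_self hp, ← sup_assoc, hsc]

theorem foldl_sup_sup_foldl_pad_of_sup_eq (l : List (ℝ × A))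
    (hl : ∀ q ∈ l, q.1 ∈ Set.Ioo (0:ℝ) 1) {s c : A} (hsc : sup s c = s) :
    sup (l.foldl (fun acc q => sup acc q.2) s) (l.foldl (fun acc q => pad q.1 acc q.2) c) =
      l.foldl (fun acc q => sup acc q.2) s := by
  induction l generalizing s c with
  | nil => exact hsc
  | cons q l ih =>
    exact ih (fun r hr => hl r (List.mem_cons_of_mem q hr))
      (sup_sup_pad_of_sup_eq (hl q List.mem_cons_self) hsc q.2)

end ConvexSemilattice

/-- If `t` is an iterated convex combination `(⋯(t₁ +_{p₁} t₂) +_{p₂} ⋯) +_{p_{n-1}} tₙ`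
of `t₁, …, tₙ` (encoded by a head `t₁` and a list of pairs `(pᵢ, tᵢ₊₁)`), then
`t₁ ⊕ ⋯ ⊕ tₙ = t₁ ⊕ ⋯ ⊕ tₙ ⊕ t`. -/
theorem sup_absorb_convex_combination {A : Type*} [ConvexSemilattice A]
    (t₁ : A) (l : List (ℝ × A)) (hl : ∀ q ∈ l, q.1 ∈ Set.Ioo (0:ℝ) 1) :
    (l.foldl (fun acc q => sup acc q.2) t₁) =
      sup (l.foldl (fun acc q => sup acc q.2) t₁)
        (l.foldl (fun acc q => pad q.1 acc q.2) t₁) :=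
  (foldl_sup_sup_foldl_pad_of_sup_eq l hl (sup_idem t₁)).symm
end
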